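/- arXiv:2110.02400 — 5 statements merged into one kernel-verified Lean document; each statement's English description precedes it below -/
import Mathlib

section
/- Let β = 0.89. For all z ∈ [0,1], (1/β)(e^{β(z-1)} - e^{-β}) + ((1 - e^{-β})/β)(1 - z) ≥ 0.5893. -/
/-!
With `c = (1 - e^{-β}) / β`, the tangent line of `exp` at `log c` gives
`e^t ≥ c (1 + t - log c)`, and substituting `t = β (z - 1)` makes the `z`-dependence cancel:
the expression is at least `(c - e^{-β} - c log c) / β` for every real `z`. This is its exact
minimum, `≈ 0.589313` for `β = 0.89`; the numerics only need `log c ≤ -0.4122` and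
`e^{-0.89}` to six decimals.
-/

open Real

lemma exp_neg_089_mem_Icc : exp (-0.89) ∈ Set.Icc (0.410655 : ℝ) 0.410656 := by
  have h := exp_bound (x := -0.89) (by norm_num [abs_le]) (n := 10) (by norm_num)
  norm_num [abs_le, Finset.sum_range_succ, Nat.factorial] at h ⊢
  constructor <;> linarith

lemma le_exp_neg_04122 : (0.66219 : ℝ) ≤ exp (-0.4122) := by
  have h := exp_bound (x := -0.4122) (by norm_num [abs_le]) (n := 8) (by norm_num)
  norm_num [abs_le, Finset.sum_range_succ, Nat.factorial] at h ⊢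
  linarith

lemma mul_one_add_sub_log_le_exp {c : ℝ} (hc : 0 < c) (t : ℝ) :
    c * (1 + t - log c) ≤ exp t := by
  have h := add_one_le_exp (t - log c)
  rw [exp_sub, exp_log hc, le_div_iff₀ hc] at h
  linarith

lemma sub_sub_mul_log_div_le {β c : ℝ} (hβ : 0 < β) (hc : 0 < c) (E z : ℝ) :
    (c - E - c * log c) / β ≤ 1 / β * (exp (β * (z - 1)) - E) + c * (1 - z) := by
  have h := mul_one_add_sub_log_le_exp hc (β * (z - 1))
  have hexpand : (1 / β * (exp (β * (z - 1)) - E) + c * (1 - z)) * β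
      = exp (β * (z - 1)) - E + c * β * (1 - z) := by
    field_simp
  rw [div_le_iff₀ hβ, hexpand]
  linarith

theorem stmt_3_general (β : ℝ) (hβ : β = 0.89) (z : ℝ) :
    (1 / β) * (Real.exp (β * (z - 1)) - Real.exp (-β))
      + ((1 - Real.exp (-β)) / β) * (1 - z) ≥ 0.5893 := by
  subst hβ
  obtain ⟨hE_lo, hE_hi⟩ := exp_neg_089_mem_Icc
  set c := (1 - exp (-0.89)) / (0.89 : ℝ) with hc_def
  have hc_mul : c * 0.89 = 1 - exp (-0.89) := by rw [hc_def]; field_simp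
  have hc : 0 < c := by linarith
  have hlog : log c ≤ -0.4122 := by
    rw [log_le_iff_le_exp hc]
    exact le_trans (by linarith) le_exp_neg_04122
  have hc_log : c * log c ≤ c * -0.4122 := mul_le_mul_of_nonneg_left hlog hc.le
  refine le_trans ?_ (sub_sub_mul_log_div_le (by norm_num) hc _ z)
  rw [le_div_iff₀ (by norm_num)]
  linarith

theorem stmt_3 (β : ℝ) (hβ : β = 0.89) (z : ℝ) (hz : z ∈ Set.Icc (0:ℝ) 1) :
    (1 / β) * (Real.exp (β * (z - 1)) - Real.exp (-β))
      + ((1 - Real.exp (-β)) / β) * (1 - z) ≥ 0.5893 :=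
  stmt_3_general β hβ z
end

section
/- Let β ∈ (0,1], g(x) = e^{β(x-1)}, G(x) = (1/β)e^{β(x-1)}, and f(z₁,z₂,x) = G(z₂) - G(z₁) + (1-g(x))(1-z₁) + (1-z₂)(G(x) - G(0)) + z₁(1 - g(0)). If 0 ≤ z₁ ≤ z₂ ≤ 1, x ∈ [0,1], and 1 - z₂ ≥ β(1 - z₁), then f(z₁,z₂,x) ≥ 1 - e^{-β}. -/
/-
Writing `G = g / β`, the excess of `f` over `1 - g 0` splits as
`(g z₂ - g z₁) / β + (g x - g 0) * ((1 - z₂) - β * (1 - z₁)) / β`,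
and both terms are nonnegative as soon as `g` is monotone, `z₁ ≤ z₂`, `0 ≤ x` and
`β * (1 - z₁) ≤ 1 - z₂`.
-/

open Real

theorem one_sub_le_of_monotone {g : ℝ → ℝ} (hg : Monotone g) {β z₁ z₂ x : ℝ} (hβ : 0 < β)
    (h12 : z₁ ≤ z₂) (hx : 0 ≤ x) (hcase : β * (1 - z₁) ≤ 1 - z₂) :
    1 - g 0 ≤ g z₂ / β - g z₁ / β + (1 - g x) * (1 - z₁)
      + (1 - z₂) * (g x / β - g 0 / β) + z₁ * (1 - g 0) := by
  have hsplit : g z₂ / β - g z₁ / β + (1 - g x) * (1 - z₁)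
      + (1 - z₂) * (g x / β - g 0 / β) + z₁ * (1 - g 0)
      = 1 - g 0 + (g z₂ - g z₁) / β + (g x - g 0) * ((1 - z₂) - β * (1 - z₁)) / β := by
    field_simp
    ring
  have hz : 0 ≤ (g z₂ - g z₁) / β := div_nonneg (sub_nonneg.2 (hg h12)) hβ.le
  have hx' : 0 ≤ (g x - g 0) * ((1 - z₂) - β * (1 - z₁)) / β :=
    div_nonneg (mul_nonneg (sub_nonneg.2 (hg hx)) (sub_nonneg.2 hcase)) hβ.le
  linarith

theorem stmt_7_general (β : ℝ) (hβ : 0 < β)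
    (g G : ℝ → ℝ)
    (hg : ∀ x, g x = Real.exp (β * (x - 1)))
    (hG : ∀ x, G x = (1 / β) * Real.exp (β * (x - 1)))
    (f : ℝ → ℝ → ℝ → ℝ)
    (hf : ∀ z₁ z₂ x, f z₁ z₂ x = G z₂ - G z₁ + (1 - g x) * (1 - z₁)
      + (1 - z₂) * (G x - G 0) + z₁ * (1 - g 0))
    (z₁ z₂ x : ℝ) (h12 : z₁ ≤ z₂)
    (hx : x ∈ Set.Icc (0:ℝ) 1) (hcase : 1 - z₂ ≥ β * (1 - z₁)) :
    f z₁ z₂ x ≥ 1 - Real.exp (-β) := by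
  have hG_eq : ∀ y, G y = g y / β := fun y => by rw [hG, hg]; ring
  have hg_zero : g 0 = exp (-β) := by rw [hg]; ring_nf
  have hg_mono : Monotone g := fun a b hab => by
    simp only [hg]
    exact exp_le_exp.2 (mul_le_mul_of_nonneg_left (by linarith) hβ.le)
  rw [hf, hG_eq, hG_eq, hG_eq, hG_eq, ← hg_zero]
  exact one_sub_le_of_monotone hg_mono hβ h12 hx.1 hcase

theorem stmt_7 (β : ℝ) (hβ : 0 < β) (hβ1 : β ≤ 1)
    (g G : ℝ → ℝ)
    (hg : ∀ x, g x = Real.exp (β * (x - 1)))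
    (hG : ∀ x, G x = (1 / β) * Real.exp (β * (x - 1)))
    (f : ℝ → ℝ → ℝ → ℝ)
    (hf : ∀ z₁ z₂ x, f z₁ z₂ x = G z₂ - G z₁ + (1 - g x) * (1 - z₁)
      + (1 - z₂) * (G x - G 0) + z₁ * (1 - g 0))
    (z₁ z₂ x : ℝ) (h0 : 0 ≤ z₁) (h12 : z₁ ≤ z₂) (h21 : z₂ ≤ 1)
    (hx : x ∈ Set.Icc (0:ℝ) 1) (hcase : 1 - z₂ ≥ β * (1 - z₁)) :
    f z₁ z₂ x ≥ 1 - Real.exp (-β) :=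
  stmt_7_general β hβ g G hg hG f hf z₁ z₂ x h12 hx hcase
end

section
/- Let β ∈ (0,1], g(x) = e^{β(x-1)}, G(x) = (1/β)e^{β(x-1)}, and f(z₁,z₂,x) = G(z₂) - G(z₁) + (1-g(x))(1-z₁) + (1-z₂)(G(x) - G(0)) + z₁(1 - g(0)). If 0 ≤ z₁ ≤ z₂ ≤ 1, x ∈ [0,1], and 1 - z₂ < β(1 - z₁), then f(z₁,z₂,x) ≥ min{ (1/β)(e^{β(z₂-1)} - e^{-β}) + ((1-e^{-β})/β)(1-z₂), 1 - e^{-β} }. -/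
/-!
After multiplying by `β`, `f` depends on `x` only through `g x ≤ 1`, with coefficient
`(1 - z₂) - β (1 - z₁) < 0`, so `x = 1` is the worst case. What remains is a concave function
of `z₁` (linear minus an exponential), so on `[0, z₂]` it is at least the smaller of its values
at `z₁ = 0`, which is `β` times the first term of the minimum, and at `z₁ = z₂`, which exceeds
`β (1 - e^{-β})` by `(1 - e^{-β}) (1 - z₂) (1 - β) ≥ 0`.
-/
open Real Set

theorem concaveOn_add_mul_sub_exp (a b β c : ℝ) :
    ConcaveOn ℝ univ (fun t => a + b * t - exp (β * t + c)) := by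
  refine ⟨convex_univ, fun x _ y _ p q hp hq hpq => ?_⟩
  have key := convexOn_exp.2 (mem_univ (β * x + c)) (mem_univ (β * y + c)) hp hq hpq
  simp only [smul_eq_mul] at key ⊢
  have harg : p * (β * x + c) + q * (β * y + c) = β * (p * x + q * y) + c := by
    linear_combination c * hpq
  rw [harg] at key
  linear_combination a * hpq + key

theorem min_le_exp_sub_exp_add_mul {β z₁ z₂ : ℝ} (hβ : 0 ≤ β) (hβ1 : β ≤ 1)
    (h0 : 0 ≤ z₁) (h12 : z₁ ≤ z₂) (h21 : z₂ ≤ 1) :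
    min (exp (β * (z₂ - 1)) - exp (-β) + (1 - exp (-β)) * (1 - z₂)) (β * (1 - exp (-β))) ≤
      exp (β * (z₂ - 1)) - exp (β * (z₁ - 1)) + (1 - exp (-β)) * (1 - z₂ + β * z₁) := by
  set h : ℝ → ℝ := fun t =>
    exp (β * (z₂ - 1)) + (1 - exp (-β)) * (1 - z₂) + β * (1 - exp (-β)) * t - exp (β * t + -β)
  have hexp : exp (-β) ≤ 1 := exp_le_one_iff.2 (by linarith)
  have h_left : h 0 = exp (β * (z₂ - 1)) - exp (-β) + (1 - exp (-β)) * (1 - z₂) := by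
    simp only [h]; ring_nf
  have h_right : β * (1 - exp (-β)) ≤ h z₂ := by
    have : 0 ≤ (1 - exp (-β)) * ((1 - z₂) * (1 - β)) :=
      mul_nonneg (by linarith) (mul_nonneg (by linarith) (by linarith))
    simp only [h]
    rw [show β * z₂ + -β = β * (z₂ - 1) by ring]
    linear_combination this
  have h_mid : h z₁ =
      exp (β * (z₂ - 1)) - exp (β * (z₁ - 1)) + (1 - exp (-β)) * (1 - z₂ + β * z₁) := by
    simp only [h]
    rw [show β * z₁ + -β = β * (z₁ - 1) by ring]
    ring
  calc _ ≤ min (h 0) (h z₂) := by rw [h_left]; exact min_le_min_left _ h_right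
    _ ≤ h z₁ := (concaveOn_add_mul_sub_exp _ _ β (-β)).min_le_of_mem_Icc (mem_univ _) (mem_univ _)
          ⟨h0, h12⟩
    _ = _ := h_mid

theorem stmt_8 (β : ℝ) (hβ : 0 < β) (hβ1 : β ≤ 1)
    (g G : ℝ → ℝ)
    (hg : ∀ x, g x = Real.exp (β * (x - 1)))
    (hG : ∀ x, G x = (1 / β) * Real.exp (β * (x - 1)))
    (f : ℝ → ℝ → ℝ → ℝ)
    (hf : ∀ z₁ z₂ x, f z₁ z₂ x = G z₂ - G z₁ + (1 - g x) * (1 - z₁)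
      + (1 - z₂) * (G x - G 0) + z₁ * (1 - g 0))
    (z₁ z₂ x : ℝ) (h0 : 0 ≤ z₁) (h12 : z₁ ≤ z₂) (h21 : z₂ ≤ 1)
    (hx : x ∈ Set.Icc (0:ℝ) 1) (hcase : 1 - z₂ < β * (1 - z₁)) :
    f z₁ z₂ x ≥ min
      ((1 / β) * (Real.exp (β * (z₂ - 1)) - Real.exp (-β))
        + ((1 - Real.exp (-β)) / β) * (1 - z₂))
      (1 - Real.exp (-β)) := by
  have hβf : β * f z₁ z₂ x = exp (β * (z₂ - 1)) - exp (β * (z₁ - 1))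
      + (1 - exp (-β)) * (1 - z₂ + β * z₁)
      + (1 - g x) * (β * (1 - z₁) - (1 - z₂)) := by
    rw [hf, hG, hG, hG, hG, hg 0, hg x, show β * ((0:ℝ) - 1) = -β by ring]
    field_simp
    ring
  have hβmin : β * min ((1 / β) * (exp (β * (z₂ - 1)) - exp (-β))
        + ((1 - exp (-β)) / β) * (1 - z₂)) (1 - exp (-β)) =
      min (exp (β * (z₂ - 1)) - exp (-β) + (1 - exp (-β)) * (1 - z₂)) (β * (1 - exp (-β))) := by
    rw [mul_min_of_nonneg _ _ hβ.le]
    congr 1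
    field_simp
  have hgx : g x ≤ 1 := by
    rw [hg]
    exact exp_le_one_iff.2 (mul_nonpos_of_nonneg_of_nonpos hβ.le (by linarith [hx.2]))
  have hcorr : 0 ≤ (1 - g x) * (β * (1 - z₁) - (1 - z₂)) :=
    mul_nonneg (by linarith) (by linarith)
  refine le_of_mul_le_mul_left ?_ hβ
  rw [hβmin, hβf]
  linarith [min_le_exp_sub_exp_add_mul hβ.le hβ1 h0 h12 h21]
end

section
/- Let β = 0.89, g(x) = e^{β(x-1)}, G(x) = (1/β)e^{β(x-1)}, and f(z₁,z₂,x) = G(z₂) - G(z₁) + (1-g(x))(1-z₁) + (1-z₂)(G(x) - G(0)) + z₁(1 - g(0)). Then for all 0 ≤ z₁ ≤ z₂ ≤ 1 and x ∈ [0,1], f(z₁,z₂,x) ≥ 0.589. -/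
/-!
Write `E = exp (-β)`. For fixed `z₁, z₂` the function `f` is affine in `g x`, which runs over
`[E, 1]`, so it suffices to take `x = 0` or `x = 1`. At `x = 0` the value is
`(G z₂ - G z₁) + (1 - E) ≥ 1 - E`. At `x = 1` it is concave in `z₁` (since `G` is convex), so it
suffices to take `z₁ = z₂`, where the value is at least `1 - E` because `β ≤ 1`, or `z₁ = 0`,
a one-variable inequality in `z₂`. For `β = 0.89` one has `1 - E > 0.589`, and the one-variable
inequality follows from the tangent line to `g` at `z₂ = 0.5368`, close to the point where
`g z₂ = (1 - E) / β` and the left side is minimal.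
-/

open Real Set

/-- The function `f` of the statement, with `g x = exp (β * (x - 1))` and `G = g / β` unfolded. -/
noncomputable def ratioBound (β z₁ z₂ x : ℝ) : ℝ :=
  exp (β * (z₂ - 1)) / β - exp (β * (z₁ - 1)) / β + (1 - exp (β * (x - 1))) * (1 - z₁)
    + (1 - z₂) * (exp (β * (x - 1)) / β - exp (-β) / β) + z₁ * (1 - exp (-β))

section Reduction

variable {β : ℝ}

lemma ratioBound_sub_ratioBound (z₁ z₂ x y : ℝ) :
    ratioBound β z₁ z₂ x - ratioBound β z₁ z₂ y
      = ((1 - z₂) / β - (1 - z₁)) * (exp (β * (x - 1)) - exp (β * (y - 1))) := by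
  unfold ratioBound
  ring

lemma min_ratioBound_zero_one_le (hβ : 0 ≤ β) (z₁ z₂ : ℝ) {x : ℝ} (hx : x ∈ Icc (0 : ℝ) 1) :
    min (ratioBound β z₁ z₂ 0) (ratioBound β z₁ z₂ 1) ≤ ratioBound β z₁ z₂ x := by
  have h0 : exp (β * (0 - 1)) ≤ exp (β * (x - 1)) := exp_le_exp.2 (by nlinarith [hx.1])
  have h1 : exp (β * (x - 1)) ≤ exp (β * (1 - 1)) := exp_le_exp.2 (by nlinarith [hx.2])
  rcases le_total 0 ((1 - z₂) / β - (1 - z₁)) with hc | hc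
  · refine (min_le_left _ _).trans (sub_nonneg.1 ?_)
    rw [ratioBound_sub_ratioBound]
    exact mul_nonneg hc (sub_nonneg.2 h0)
  · refine (min_le_right _ _).trans (sub_nonneg.1 ?_)
    rw [ratioBound_sub_ratioBound]
    exact mul_nonneg_of_nonpos_of_nonpos hc (sub_nonpos.2 h1)

lemma one_sub_exp_neg_le_ratioBound_zero (hβ : 0 < β) {z₁ z₂ : ℝ} (h : z₁ ≤ z₂) :
    1 - exp (-β) ≤ ratioBound β z₁ z₂ 0 := by
  have hmono : exp (β * (z₁ - 1)) ≤ exp (β * (z₂ - 1)) := exp_le_exp.2 (by nlinarith)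
  have hval : ratioBound β z₁ z₂ 0
      = (exp (β * (z₂ - 1)) - exp (β * (z₁ - 1))) / β + (1 - exp (-β)) := by
    unfold ratioBound
    field_simp
    ring_nf
  rw [hval]
  linarith [div_nonneg (sub_nonneg.2 hmono) hβ.le]

lemma convexOn_exp_mul_sub_one_div (hβ : 0 ≤ β) :
    ConvexOn ℝ univ (fun z => exp (β * (z - 1)) / β) := by
  refine ((convexOn_exp.comp_affineMap (AffineMap.lineMap (-β) 0)).smul
    (inv_nonneg.2 hβ)).congr fun z _ => ?_
  simp only [Function.comp_apply, AffineMap.lineMap_apply, vsub_eq_sub, vadd_eq_add, smul_eq_mul]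
  ring_nf

lemma concaveOn_ratioBound_one (hβ : 0 ≤ β) (z₂ : ℝ) :
    ConcaveOn ℝ univ (fun z₁ => ratioBound β z₁ z₂ 1) := by
  have haffine : ConcaveOn ℝ univ (fun z => (1 - exp (-β)) * z
      + (exp (β * (z₂ - 1)) / β + (1 - z₂) * (1 - exp (-β)) / β)) :=
    ((LinearMap.mulLeft ℝ (1 - exp (-β))).concaveOn convex_univ).add_const _
  refine (haffine.sub (convexOn_exp_mul_sub_one_div hβ)).congr fun z _ => ?_
  simp only [ratioBound, Pi.sub_apply, sub_self, mul_zero, exp_zero]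
  ring

lemma one_sub_exp_neg_le_ratioBound_self_one (hβ0 : 0 < β) (hβ1 : β ≤ 1) {z : ℝ} (hz : z ≤ 1) :
    1 - exp (-β) ≤ ratioBound β z z 1 := by
  have hE : 0 ≤ 1 - exp (-β) := sub_nonneg.2 (exp_le_one_iff.2 (by linarith))
  have hval : ratioBound β z z 1 = (1 - z) * (1 - exp (-β)) / β + z * (1 - exp (-β)) := by
    simp only [ratioBound, sub_self, mul_zero, exp_zero]
    ring
  have hβinv : (1 - z) * (1 - exp (-β)) ≤ (1 - z) * (1 - exp (-β)) / β :=
    le_div_self (mul_nonneg (by linarith) hE) hβ0 hβ1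
  linarith

theorem le_ratioBound_of_le_face (hβ0 : 0 < β) (hβ1 : β ≤ 1) {c : ℝ} (hc : c ≤ 1 - exp (-β))
    (hface : ∀ z ∈ Icc (0 : ℝ) 1, c ≤ ratioBound β 0 z 1) {z₁ z₂ x : ℝ} (h0 : 0 ≤ z₁)
    (h12 : z₁ ≤ z₂) (h2 : z₂ ≤ 1) (hx : x ∈ Icc (0 : ℝ) 1) :
    c ≤ ratioBound β z₁ z₂ x := by
  have hone : c ≤ ratioBound β z₁ z₂ 1 :=
    (le_min (hface z₂ ⟨h0.trans h12, h2⟩)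
      (hc.trans (one_sub_exp_neg_le_ratioBound_self_one hβ0 hβ1 h2))).trans
      ((concaveOn_ratioBound_one hβ0.le z₂).min_le_of_mem_Icc trivial trivial ⟨h0, h12⟩)
  have hzero : c ≤ ratioBound β z₁ z₂ 0 :=
    hc.trans (one_sub_exp_neg_le_ratioBound_zero hβ0 h12)
  exact (le_min hzero hone).trans (min_ratioBound_zero_one_le hβ0.le z₁ z₂ hx)

end Reduction

lemma exp_neg_089_le : exp (-0.89) ≤ (0.41067 : ℝ) := by
  have hlow : (2.435048 : ℝ) ≤ exp 0.89 :=
    le_trans (by norm_num [Finset.sum_range_succ, Nat.factorial])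
      (sum_le_exp_of_nonneg (x := 0.89) (by norm_num) 9)
  rw [exp_neg, inv_le_comm₀ (exp_pos _) (by norm_num)]
  exact le_trans (by norm_num) hlow

lemma le_exp_neg_0412248 : (0.66205 : ℝ) ≤ exp (-0.412248) := by
  have hup : exp 0.412248 ≤ (1.51030 : ℝ) := by
    have h := exp_bound (x := (0.412248 : ℝ)) (by norm_num [abs_of_nonneg]) (n := 6) (by norm_num)
    rw [abs_of_nonneg (by norm_num : (0 : ℝ) ≤ 0.412248)] at h
    have h' := (abs_le.mp h).2
    norm_num [Finset.sum_range_succ, Nat.factorial] at h'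
    linarith
  rw [exp_neg, le_inv_comm₀ (by norm_num) (exp_pos _)]
  exact hup.trans (by norm_num)

lemma ratioBound_089_face {z : ℝ} (hz : z ∈ Icc (0 : ℝ) 1) : 0.589 ≤ ratioBound 0.89 0 z 1 := by
  have hE := exp_neg_089_le
  have htangent : 0.66205 * (1 + 0.89 * (z - 0.5368)) ≤ exp (0.89 * (z - 1)) := by
    -- `0.412248 = 0.89 * (1 - 0.5368)`
    have hsplit : exp (0.89 * (z - 1)) = exp (-0.412248) * exp (0.89 * (z - 0.5368)) := by
      rw [← exp_add]
      ring_nf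
    rw [hsplit]
    exact mul_le_mul le_exp_neg_0412248 (add_one_le_exp _ |>.trans_eq' (by ring))
      (by linarith [hz.1]) (exp_pos _).le
  have hval : ratioBound 0.89 0 z 1
      = (exp (0.89 * (z - 1)) - exp (-0.89) + (1 - z) * (1 - exp (-0.89))) / 0.89 := by
    simp only [ratioBound, sub_self, zero_sub, mul_zero, mul_neg, mul_one, exp_zero]
    ring
  rw [hval, le_div_iff₀ (by norm_num)]
  linarith [mul_nonneg (sub_nonneg.2 hz.2) (sub_nonneg.2 hE), hz.2]

theorem stmt_9 (β : ℝ) (hβ : β = 0.89)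
    (g G : ℝ → ℝ)
    (hg : ∀ x, g x = Real.exp (β * (x - 1)))
    (hG : ∀ x, G x = (1 / β) * Real.exp (β * (x - 1)))
    (f : ℝ → ℝ → ℝ → ℝ)
    (hf : ∀ z₁ z₂ x, f z₁ z₂ x = G z₂ - G z₁ + (1 - g x) * (1 - z₁)
      + (1 - z₂) * (G x - G 0) + z₁ * (1 - g 0)) :
    ∀ z₁ z₂ x : ℝ, 0 ≤ z₁ → z₁ ≤ z₂ → z₂ ≤ 1 → x ∈ Set.Icc (0:ℝ) 1 →
      f z₁ z₂ x ≥ 0.589 := by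
  intro z₁ z₂ x h0 h12 h2 hx
  subst hβ
  have hf_eq : f z₁ z₂ x = ratioBound 0.89 z₁ z₂ x := by
    simp only [hf, hg, hG, ratioBound, zero_sub, mul_neg, mul_one]
    ring
  rw [ge_iff_le, hf_eq]
  exact le_ratioBound_of_le_face (by norm_num) (by norm_num) (by linarith [exp_neg_089_le])
    (fun _ => ratioBound_089_face) h0 h12 h2 hx
end

section
/- Let β = 1, g(x) = e^{x-1}, G(x) = e^{x-1}, and f(z₁,z₂,x) = G(z₂) - G(z₁) + (1-g(x))(1-z₁) + (1-z₂)(G(x) - G(0)) + z₁(1 - g(0)). Then for all 0 ≤ z₁ ≤ z₂ ≤ 1 and x ∈ [0,1], f(z₁,z₂,x) ≥ 0.554. -/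
/-!
With `u = e⁻¹` and `h z = e^(z-1) - (1 - u) z` one has
`f z₁ z₂ x = h z₂ - h z₁ + (1 - u) + (1 - g x) (z₂ - z₁)`, and the last term is nonnegative.
Since `h 0 = h 1 = u` and `h` is convex, `h z₁ ≤ u`. The minimum of `h` is
`-(1 - u) log (1 - u) ≈ 0.2899`, attained at `1 + log (1 - u) ≈ 0.5413`; the tangent line of
`exp` at `1 - 0.4585` bounds `h z₂` from below by `0.2898`. Hence `f ≥ 1 - 2u + 0.2898 > 0.554`
(the true minimum is about `0.5542`).
-/

open Real

lemma exp_mul_sub_add_one_le_exp (c x : ℝ) : exp c * (x - c + 1) ≤ exp x := by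
  calc exp c * (x - c + 1) ≤ exp c * exp (x - c) := by gcongr; exact add_one_le_exp _
    _ = exp x := by rw [← exp_add, add_sub_cancel]

lemma exp_sub_one_le_of_mem_Icc {t : ℝ} (ht₀ : 0 ≤ t) (ht₁ : t ≤ 1) :
    exp (t - 1) ≤ (1 - t) * exp (-1) + t := by
  have h := convexOn_exp.2 (Set.mem_univ (-1)) (Set.mem_univ 0) (sub_nonneg.2 ht₁) ht₀ (by ring)
  simp only [smul_eq_mul, mul_neg, mul_one, mul_zero, add_zero, exp_zero] at h
  rwa [neg_sub] at h

lemma exp_neg_917_div_2000_gt : 0.6322 < exp (-(917 / 2000)) := by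
  have h := exp_bound' (x := 917 / 2000) (by norm_num) (by norm_num) (n := 6) (by norm_num)
  simp only [Finset.sum_range_succ, Finset.sum_range_zero] at h
  norm_num [Nat.factorial] at h
  rw [exp_neg, lt_inv_comm₀ (by norm_num) (exp_pos _)]
  linarith

lemma exp_sub_one_sub_mul_ge {z : ℝ} (hz : 0 ≤ z) :
    0.2898 ≤ exp (z - 1) - (1 - exp (-1)) * z := by
  have htangent := exp_mul_sub_add_one_le_exp (-(917 / 2000)) (z - 1)
  have hc := exp_neg_917_div_2000_gt
  have hslope : 1 - exp (-1) ≤ exp (-(917 / 2000)) := by linarith [exp_neg_one_gt_d9]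
  have := mul_le_mul_of_nonneg_right hslope hz
  linarith

theorem stmt_10
    (g G : ℝ → ℝ)
    (hg : ∀ x, g x = Real.exp (x - 1))
    (hG : ∀ x, G x = Real.exp (x - 1))
    (f : ℝ → ℝ → ℝ → ℝ)
    (hf : ∀ z₁ z₂ x, f z₁ z₂ x = G z₂ - G z₁ + (1 - g x) * (1 - z₁)
      + (1 - z₂) * (G x - G 0) + z₁ * (1 - g 0)) :
    ∀ z₁ z₂ x : ℝ, 0 ≤ z₁ → z₁ ≤ z₂ → z₂ ≤ 1 → x ∈ Set.Icc (0:ℝ) 1 →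
      f z₁ z₂ x ≥ 0.554 := by
  rintro z₁ z₂ x h₀ h₁₂ h₂ ⟨-, hx⟩
  simp only [hf, hg, hG, zero_sub]
  have hz₁ := exp_sub_one_le_of_mem_Icc h₀ (h₁₂.trans h₂)
  have hz₂ := exp_sub_one_sub_mul_ge (h₀.trans h₁₂)
  have hgx : 0 ≤ (1 - exp (x - 1)) * (z₂ - z₁) :=
    mul_nonneg (by simpa using hx) (by linarith)
  linarith [exp_neg_one_lt_d9]
end
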